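/- arXiv:1709.06171 — 4 statements merged into one kernel-verified Lean document; each statement's English description precedes it below -/
import Mathlib

section
/- Let G and G' be n×n centered symmetric psd matrices of ranks d and d' respectively, with n > d + d' + 1. With V the centering matrix, σ_G = ⟨G,V⟩/‖V‖_F^2, H = G − σ_G V and similarly for G'. Then σ_{G'} − σ_G is an eigenvalue of H − H' with multiplicity at least n − d − d' − 1. -/
open Matrix

/-- The centering matrix `V = I − (1/n)·1·1ᵀ`. -/
noncomputable def centering (n : ℕ) : Matrix (Fin n) (Fin n) ℝ :=
  1 - (n : ℝ)⁻¹ • Matrix.of (fun _ _ => (1 : ℝ))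

/-- `σ_G = ⟨G,V⟩ / ‖V‖_F²` (Frobenius inner product and norm). -/
noncomputable def sigmaG {n : ℕ} (G : Matrix (Fin n) (Fin n) ℝ) : ℝ :=
  (Gᵀ * centering n).trace / (∑ i, ∑ j, (centering n i j) ^ 2)

/-- If `G, G'` are centered symmetric psd matrices of ranks `d, d'` with `n > d+d'+1`,
then `σ_{G'} − σ_G` is an eigenvalue of `H − H'` with multiplicity at least `n−d−d'−1`,
where `H = G − σ_G·V` and `H' = G' − σ_{G'}·V`. -/
theorem eig_multiplicity_diff {n d d' : ℕ} (hn : d + d' + 1 < n)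
    (G G' : Matrix (Fin n) (Fin n) ℝ)
    (hG : G.PosSemidef) (hG' : G'.PosSemidef)
    (hrank : G.rank = d) (hrank' : G'.rank = d')
    (hcen : G *ᵥ (1 : Fin n → ℝ) = 0) (hcen' : G' *ᵥ (1 : Fin n → ℝ) = 0) :
    n - d - d' - 1 ≤ Module.finrank ℝ (LinearMap.ker (Matrix.toLin'
      (((G - sigmaG G • centering n) - (G' - sigmaG G' • centering n))
        - (sigmaG G' - sigmaG G) • (1 : Matrix (Fin n) (Fin n) ℝ)))) := by
  classical
  set σ := sigmaG G with hσ
  set σ' := sigmaG G' with hσ'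
  set M : Matrix (Fin n) (Fin n) ℝ :=
    ((G - σ • centering n) - (G' - σ' • centering n)) - (σ' - σ) • 1 with hM
  set f : (Fin n → ℝ) →ₗ[ℝ] ℝ := ∑ i, LinearMap.proj i with hf
  let K1 : Submodule ℝ (Fin n → ℝ) := LinearMap.ker G.mulVecLin
  let K2 : Submodule ℝ (Fin n → ℝ) := LinearMap.ker G'.mulVecLin
  let K3 : Submodule ℝ (Fin n → ℝ) := LinearMap.ker f
  -- the intersection is contained in the kernel of M
  have hWle : K1 ⊓ K2 ⊓ K3 ≤ LinearMap.ker (Matrix.toLin' M) := by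
    intro x hx
    obtain ⟨⟨h1, h2⟩, h3⟩ := hx
    have hG0 : G *ᵥ x = 0 := h1
    have hG'0 : G' *ᵥ x = 0 := h2
    have hs : ∑ j, x j = 0 := by
      have : f x = 0 := h3
      simpa [hf, LinearMap.proj] using this
    have hJ : (Matrix.of (fun _ _ => (1 : ℝ)) : Matrix (Fin n) (Fin n) ℝ) *ᵥ x = 0 := by
      funext i
      simp [Matrix.mulVec, dotProduct, hs]
    have hJ' : (Matrix.of ((n:ℝ)⁻¹ • fun _ _ => (1:ℝ)) : Matrix (Fin n) (Fin n) ℝ) *ᵥ x = 0 := by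
      funext i
      simp [Matrix.mulVec, dotProduct, ← Finset.mul_sum, hs]
    have hV : centering n *ᵥ x = x := by
      simp [centering, Matrix.sub_mulVec, Matrix.one_mulVec, hJ']
    simp only [LinearMap.mem_ker, Matrix.toLin'_apply, hM,
      Matrix.sub_mulVec, Matrix.smul_mulVec, Matrix.one_mulVec, hG0, hG'0, hV]
    module
  have hfin : Module.finrank ℝ (Fin n → ℝ) = n := by
    simp
  -- rank–nullity facts
  have h1 : Module.finrank ℝ K1 + d = n := by
    have := LinearMap.finrank_range_add_finrank_ker G.mulVecLin
    rw [hfin] at this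
    have hr : Module.finrank ℝ (LinearMap.range G.mulVecLin) = d := hrank
    show Module.finrank ℝ (LinearMap.ker G.mulVecLin) + d = n
    omega
  have h2 : Module.finrank ℝ K2 + d' = n := by
    have := LinearMap.finrank_range_add_finrank_ker G'.mulVecLin
    rw [hfin] at this
    have hr : Module.finrank ℝ (LinearMap.range G'.mulVecLin) = d' := hrank'
    show Module.finrank ℝ (LinearMap.ker G'.mulVecLin) + d' = n
    omega
  have h3 : n ≤ Module.finrank ℝ K3 + 1 := by
    have := LinearMap.finrank_range_add_finrank_ker f
    rw [hfin] at this
    have hr : Module.finrank ℝ (LinearMap.range f) ≤ 1 := by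
      simpa using Submodule.finrank_le (LinearMap.range f)
    show n ≤ Module.finrank ℝ (LinearMap.ker f) + 1
    omega
  have hinf1 : Module.finrank ℝ (K1 ⊔ K2 : Submodule ℝ (Fin n → ℝ))
      + Module.finrank ℝ (K1 ⊓ K2 : Submodule ℝ (Fin n → ℝ))
      = Module.finrank ℝ K1 + Module.finrank ℝ K2 :=
    Submodule.finrank_sup_add_finrank_inf_eq K1 K2
  have hinf2 : Module.finrank ℝ ((K1 ⊓ K2) ⊔ K3 : Submodule ℝ (Fin n → ℝ))
      + Module.finrank ℝ (K1 ⊓ K2 ⊓ K3 : Submodule ℝ (Fin n → ℝ))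
      = Module.finrank ℝ (K1 ⊓ K2 : Submodule ℝ (Fin n → ℝ)) + Module.finrank ℝ K3 :=
    Submodule.finrank_sup_add_finrank_inf_eq (K1 ⊓ K2) K3
  have hle1 : Module.finrank ℝ (K1 ⊔ K2 : Submodule ℝ (Fin n → ℝ)) ≤ n := by
    simpa [hfin] using Submodule.finrank_le (K1 ⊔ K2)
  have hle2 : Module.finrank ℝ ((K1 ⊓ K2) ⊔ K3 : Submodule ℝ (Fin n → ℝ)) ≤ n := by
    simpa [hfin] using Submodule.finrank_le ((K1 ⊓ K2) ⊔ K3)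
  have hmono := Submodule.finrank_mono hWle
  omega
end

section
/- The linear maps D ↦ −(1/2)·V·D·V from symmetric hollow n×n matrices to centered symmetric n×n matrices, and G ↦ diag(G)·1_n^T − 2G + 1_n·diag(G)^T in the other direction, are mutually inverse linear isomorphisms. -/
open Matrix

/-- The map `D ↦ −(1/2)·V·D·V` from hollow symmetric matrices to centered Gram matrices. -/
noncomputable def toGram {n : ℕ} (D : Matrix (Fin n) (Fin n) ℝ) : Matrix (Fin n) (Fin n) ℝ :=
  (-(1/2 : ℝ)) • (centering n * D * centering n)

/-- The map `G ↦ diag(G)·1ᵀ − 2G + 1·diag(G)ᵀ`. -/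
def toDist {n : ℕ} (G : Matrix (Fin n) (Fin n) ℝ) : Matrix (Fin n) (Fin n) ℝ :=
  Matrix.of fun i j => G i i - 2 * G i j + G j j

lemma cent_mul {n : ℕ} (A : Matrix (Fin n) (Fin n) ℝ) (i j : Fin n) :
    (centering n * A) i j = A i j - (n:ℝ)⁻¹ * ∑ k, A k j := by
  simp [centering, Matrix.sub_mul, Matrix.mul_apply, Matrix.sub_apply, sub_mul,
    Finset.sum_sub_distrib, Matrix.one_apply, Finset.sum_ite_eq, Finset.mul_sum]

lemma mul_cent {n : ℕ} (A : Matrix (Fin n) (Fin n) ℝ) (i j : Fin n) :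
    (A * centering n) i j = A i j - (n:ℝ)⁻¹ * ∑ k, A i k := by
  simp [centering, Matrix.mul_sub, Matrix.mul_apply, Matrix.sub_apply, mul_sub,
    Finset.sum_sub_distrib, Matrix.one_apply, Finset.sum_ite_eq', Finset.mul_sum,
    Finset.sum_mul, mul_comm]

lemma toGram_apply {n : ℕ} (A : Matrix (Fin n) (Fin n) ℝ) (i j : Fin n) :
    toGram A i j = -(1/2 : ℝ) * (A i j - (n:ℝ)⁻¹ * (∑ k, A k j)
      - (n:ℝ)⁻¹ * (∑ k, A i k) + (n:ℝ)⁻¹ * ((n:ℝ)⁻¹ * ∑ k, ∑ l, A l k)) := by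
  have h1 : ∀ k, (centering n * A) i k = A i k - (n:ℝ)⁻¹ * ∑ l, A l k := fun k => cent_mul A i k
  have h2 : toGram A i j = -(1/2:ℝ) * ((centering n * A) i j - (n:ℝ)⁻¹ * ∑ k, (centering n * A) i k) := by
    simp [toGram, mul_cent]
  rw [h2, cent_mul]
  simp only [h1, Finset.sum_sub_distrib, ← Finset.mul_sum]
  ring

/-- The linear maps `D ↦ −(1/2)·V·D·V` (hollow symmetric → centered symmetric) and
`G ↦ diag(G)·1ᵀ − 2G + 1·diag(G)ᵀ` (centered symmetric → hollow symmetric)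
are mutually inverse linear isomorphisms between these subspaces. -/
theorem gram_dist_isomorphism {n : ℕ} (hn : 0 < n) :
    (∀ D : Matrix (Fin n) (Fin n) ℝ, D.IsSymm → (∀ i, D i i = 0) →
      (toGram D).IsSymm ∧ toGram D *ᵥ (1 : Fin n → ℝ) = 0 ∧ toDist (toGram D) = D) ∧
    (∀ G : Matrix (Fin n) (Fin n) ℝ, G.IsSymm → G *ᵥ (1 : Fin n → ℝ) = 0 →
      (toDist G).IsSymm ∧ (∀ i, toDist G i i = 0) ∧ toGram (toDist G) = G) := by
  have hn' : (n : ℝ) ≠ 0 := Nat.cast_ne_zero.mpr hn.ne'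
  constructor
  · intro D hs h0
    have hsym : ∀ i j, D j i = D i j := fun i j => hs.apply i j
    have hrow : ∀ p, (∑ k, D k p) = ∑ k, D p k := fun p =>
      Finset.sum_congr rfl fun k _ => hsym p k
    refine ⟨?_, ?_, ?_⟩
    · ext i j
      rw [Matrix.transpose_apply, toGram_apply, toGram_apply, hsym j i, hrow i, ← hrow j]
      ring
    · have cent_one : centering n *ᵥ (1 : Fin n → ℝ) = 0 := by
        funext i
        simp [centering, Matrix.mulVec, dotProduct, Matrix.sub_apply, Matrix.one_apply,
          Finset.sum_sub_distrib, Finset.sum_ite_eq, Finset.card_univ, hn']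
      rw [toGram, Matrix.smul_mulVec, ← Matrix.mulVec_mulVec, cent_one,
        Matrix.mulVec_zero, smul_zero]
    · ext i j
      simp only [toDist, Matrix.of_apply]
      rw [toGram_apply, toGram_apply, toGram_apply, h0 i, h0 j, hrow i, hrow j]
      ring
  · intro G hsG hG
    have hsym : ∀ i j, G j i = G i j := fun i j => hsG.apply i j
    have hGrow : ∀ p, (∑ k, G p k) = 0 := by
      intro p
      have := congrFun hG p
      simpa [Matrix.mulVec, dotProduct] using this
    have hGcol : ∀ p, (∑ k, G k p) = 0 := by
      intro p
      rw [Finset.sum_congr rfl fun k _ => hsym p k]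
      exact hGrow p
    have hDrow : ∀ p, (∑ k, toDist G p k) = n * G p p + ∑ k, G k k := by
      intro p
      simp [toDist, Finset.sum_add_distrib, Finset.sum_sub_distrib, ← Finset.mul_sum,
        ← Finset.sum_mul, hGrow, Finset.card_univ, mul_comm]
    have hDcol : ∀ p, (∑ k, toDist G k p) = n * G p p + ∑ k, G k k := by
      intro p
      simp [toDist, Finset.sum_add_distrib, Finset.sum_sub_distrib, ← Finset.mul_sum,
        ← Finset.sum_mul, hGcol, Finset.card_univ, mul_comm]
      ring
    have hDD : (∑ k, ∑ l, toDist G l k) = 2 * n * ∑ k, G k k := by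
      simp only [hDcol]
      rw [Finset.sum_add_distrib, ← Finset.mul_sum]
      simp [Finset.card_univ]
      ring
    refine ⟨?_, ?_, ?_⟩
    · ext i j
      simp only [Matrix.transpose_apply, toDist, Matrix.of_apply, hsym j i]
      ring
    · intro i; simp only [toDist, Matrix.of_apply]; ring
    · ext i j
      rw [toGram_apply, hDrow i, hDcol j, hDD]
      simp only [toDist, Matrix.of_apply]
      field_simp
      ring
end

section
/- For points x_1,…,x_n ∈ R^p with max_i ‖x_i‖ ≤ 1 and X ∈ R^{p×n} centered (X·1_n = 0), the operator norm satisfies ‖Σ_{t∈T} L_t X^T X L_t‖ ≤ 7n^2, where T is the set of all triples (i,j,k) of distinct indices with j < k and L_t = e_i e_k^T + e_k e_i^T − e_i e_j^T − e_j e_i^T + e_j e_j^T − e_k e_k^T. -/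
open Matrix
open scoped Matrix.Norms.L2Operator

/-- `L_t = e_i e_kᵀ + e_k e_iᵀ − e_i e_jᵀ − e_j e_iᵀ + e_j e_jᵀ − e_k e_kᵀ`. -/
def Lt {n : ℕ} (i j k : Fin n) : Matrix (Fin n) (Fin n) ℝ :=
  vecMulVec (Pi.single i 1) (Pi.single k 1) + vecMulVec (Pi.single k 1) (Pi.single i 1)
    - vecMulVec (Pi.single i 1) (Pi.single j 1) - vecMulVec (Pi.single j 1) (Pi.single i 1)
    + vecMulVec (Pi.single j 1) (Pi.single j 1) - vecMulVec (Pi.single k 1) (Pi.single k 1)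

/-!
Write `G = XᵀX`: it is symmetric, its rows sum to zero because `X` is centred, and its entries
lie in `[-1, 1]` by Cauchy–Schwarz. Since `L_{ikj} = -L_{ijk}` and `L_{ijj} = 0`, twice the sum
over `T` equals the sum over all triples minus twice the sum of the terms with `i = j`. Both sums
are computed entrywise; the vanishing row sums of `G` kill most terms and leave
`S_ab = δ_ab ((n² - 2n) G_aa + (2n - 2) tr G) + (n - 4) G_ab - (n - 2) (G_aa + G_bb) - tr G`.
Hence `|S_ab| ≤ 3n² δ_ab + 4n`, and the Schur test bounds the spectral norm of `S` by its
largest absolute row (and column) sum, `7n²`.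
-/

theorem Matrix.l2_opNorm_le_of_sum_abs_le {m n : Type*} [Fintype m] [Fintype n] [DecidableEq n]
    (A : Matrix m n ℝ) {r : ℝ} (hr : 0 ≤ r)
    (hrow : ∀ i, ∑ j, |A i j| ≤ r) (hcol : ∀ j, ∑ i, |A i j| ≤ r) : ‖A‖ ≤ r := by
  rw [l2_opNorm_def]
  refine ContinuousLinearMap.opNorm_le_bound _ hr fun x => ?_
  have hrow_sq (i : m) : (∑ j, A i j * x j) ^ 2 ≤ r * ∑ j, |A i j| * x j ^ 2 := by
    refine (Finset.sum_sq_le_sum_mul_sum_of_sq_le_mul _ (f := fun j => |A i j|)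
      (g := fun j => |A i j| * x j ^ 2) (fun j _ => abs_nonneg _) (fun j _ => by positivity)
      fun j _ => ?_).trans ?_
    · rw [mul_pow, ← sq_abs (A i j)]; exact le_of_eq (by ring)
    · exact mul_le_mul_of_nonneg_right (hrow i) (by positivity)
  refine (pow_le_pow_iff_left₀ (norm_nonneg _) (by positivity) two_ne_zero).1 ?_
  calc ‖(toEuclideanLin.trans LinearMap.toContinuousLinearMap A) x‖ ^ 2
      = ∑ i, (∑ j, A i j * x j) ^ 2 := by
        simp [EuclideanSpace.real_norm_sq_eq, mulVec, dotProduct]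
    _ ≤ ∑ i, r * ∑ j, |A i j| * x j ^ 2 := Finset.sum_le_sum fun i _ => hrow_sq i
    _ = r * ∑ j, (∑ i, |A i j|) * x j ^ 2 := by
        simp_rw [← Finset.mul_sum, Finset.sum_mul]; rw [Finset.sum_comm]
    _ ≤ r * ∑ j, r * x j ^ 2 := by gcongr with j; exact hcol j
    _ = (r * ‖x‖) ^ 2 := by
        rw [mul_pow, EuclideanSpace.real_norm_sq_eq, ← Finset.mul_sum]; ring

theorem abs_transpose_mul_self_apply_le_one {m n : Type*} [Fintype m] (X : Matrix m n ℝ)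
    (hX : ∀ i, Real.sqrt (∑ a, X a i ^ 2) ≤ 1) (i j : n) : |(Xᵀ * X) i j| ≤ 1 :=
  calc |(Xᵀ * X) i j| ≤ ∑ a, |X a i| * |X a j| := by
        simpa only [mul_apply, transpose_apply, abs_mul] using
          Finset.abs_sum_le_sum_abs (fun a => X a i * X a j) Finset.univ
    _ ≤ Real.sqrt (∑ a, |X a i| ^ 2) * Real.sqrt (∑ a, |X a j| ^ 2) :=
        Real.sum_mul_le_sqrt_mul_sqrt _ _ _
    _ ≤ 1 := by
        simp only [sq_abs]; exact mul_le_one₀ (hX i) (Real.sqrt_nonneg _) (hX j)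

def distinctTriples (ι : Type*) [Fintype ι] [LinearOrder ι] : Finset (ι × ι × ι) :=
  Finset.univ.filter fun t => t.1 ≠ t.2.1 ∧ t.1 ≠ t.2.2 ∧ t.2.1 < t.2.2

section Triples

variable {ι M : Type*} [Fintype ι] [LinearOrder ι] [AddCommGroup M]

theorem distinctTriples_eq_empty [Subsingleton ι] : distinctTriples ι = ∅ :=
  Finset.filter_eq_empty_iff.2 fun _ _ h => h.1 (Subsingleton.elim _ _)

theorem sum_sum_eq_two_nsmul_sum_sum_ite_lt {g : ι → ι → M} (hsymm : ∀ j k, g k j = g j k)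
    (hdiag : ∀ j, g j j = 0) :
    ∑ j, ∑ k, g j k = 2 • ∑ j, ∑ k, (if j < k then g j k else 0) := by
  have hsplit (j k : ι) : g j k = (if j < k then g j k else 0) + (if k < j then g k j else 0) := by
    rcases lt_trichotomy j k with h | rfl | h
    · simp [h, h.not_gt]
    · simp [hdiag]
    · simp [h, h.not_gt, hsymm]
  calc ∑ j, ∑ k, g j k
      = ∑ j, ∑ k, (if j < k then g j k else 0) +
          ∑ j, ∑ k, (if k < j then g k j else 0) := by
        simp only [← Finset.sum_add_distrib, ← hsplit]
    _ = 2 • ∑ j, ∑ k, (if j < k then g j k else 0) := by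
        rw [Finset.sum_comm (f := fun j k => if k < j then g k j else 0), two_nsmul]

theorem sum_sum_ite_ne_and_ne {f : ι → ι → ι → M} (hdiag : ∀ i j, f i j j = 0)
    (hswap : ∀ i j k, f i k j = f i j k) (i : ι) :
    ∑ j, ∑ k, (if i ≠ j ∧ i ≠ k then f i j k else 0) =
      ∑ j, ∑ k, f i j k - 2 • ∑ k, f i i k := by
  have hsplit (j k : ι) : (if i ≠ j ∧ i ≠ k then f i j k else 0) =
      f i j k - (if i = j then f i i k else 0) - (if i = k then f i i j else 0) := by
    by_cases hj : i = j <;> by_cases hk : i = k <;> subst_vars <;> simp [*]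
  simp only [hsplit, Finset.sum_sub_distrib, Finset.sum_ite_irrel, Finset.sum_ite_eq,
    Finset.mem_univ, if_true, Finset.sum_const_zero, two_nsmul]
  abel

theorem two_nsmul_sum_distinctTriples {f : ι → ι → ι → M} (hdiag : ∀ i j, f i j j = 0)
    (hswap : ∀ i j k, f i k j = f i j k) :
    2 • ∑ t ∈ distinctTriples ι, f t.1 t.2.1 t.2.2 =
      ∑ i, ∑ j, ∑ k, f i j k - 2 • ∑ i, ∑ k, f i i k := by
  have hinner (i : ι) : 2 • ∑ j, ∑ k, (if i ≠ j ∧ i ≠ k ∧ j < k then f i j k else 0) =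
      ∑ j, ∑ k, f i j k - 2 • ∑ k, f i i k := by
    rw [← sum_sum_ite_ne_and_ne hdiag hswap i, sum_sum_eq_two_nsmul_sum_sum_ite_lt
      (g := fun j k => if i ≠ j ∧ i ≠ k then f i j k else 0)
      (fun j k => by simp only [hswap, and_comm]) (fun j => by simp [hdiag])]
    congr! 3 with j - k -
    by_cases hjk : j < k <;> simp [hjk]
  simp only [distinctTriples, Finset.sum_filter, Fintype.sum_prod_type, Finset.smul_sum, hinner,
    Finset.sum_sub_distrib]

end Triples

section Lt

variable {n : ℕ}

theorem Lt_self_right (i j : Fin n) : Lt i j j = 0 := by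
  unfold Lt; abel

theorem Lt_swap (i j k : Fin n) : Lt i k j = -Lt i j k := by
  unfold Lt; abel

variable (G : Matrix (Fin n) (Fin n) ℝ)

theorem sum_Lt_mul_mul_Lt_apply (hrow : ∀ c, ∑ d, G c d = 0) (hcol : ∀ d, ∑ c, G c d = 0)
    (a b : Fin n) :
    ∑ i : Fin n, ∑ j : Fin n, ∑ k : Fin n, (Lt i j k * G * Lt i j k) a b =
      (if a = b then 2 * n ^ 2 * G a a + 4 * n * G.trace else 0)
      - 2 * n * G a a - 2 * n * G a b + 4 * n * G b a - 2 * n * G b b - 2 * G.trace := by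
  simp only [mul_apply, Lt, Matrix.sub_apply, Matrix.add_apply, vecMulVec_apply, Pi.single_apply,
    add_mul, mul_add, sub_mul, mul_sub, ite_mul, mul_ite, one_mul, mul_one, zero_mul, mul_zero,
    Finset.sum_add_distrib, Finset.sum_sub_distrib, Finset.sum_ite_eq, Finset.sum_ite_eq',
    Finset.mem_univ, if_true, Finset.sum_ite_irrel, Finset.sum_const_zero]
  split_ifs with hab
  · subst hab
    simp only [Finset.sum_const, Finset.card_univ, Fintype.card_fin, nsmul_eq_mul,
      ← Finset.mul_sum, hrow, hcol, trace, diag_apply]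
    ring
  · simp only [Finset.sum_const, Finset.card_univ, Fintype.card_fin, nsmul_eq_mul, hrow, hcol,
      trace, diag_apply]
    ring

theorem sum_Lt_self_mul_mul_Lt_self_apply (hrow : ∀ c, ∑ d, G c d = 0)
    (hcol : ∀ d, ∑ c, G c d = 0) (a b : Fin n) :
    ∑ i : Fin n, ∑ k : Fin n, (Lt i i k * G * Lt i i k) a b =
      (if a = b then 2 * n * G a a + 2 * G.trace else 0)
      - 2 * G a a + 2 * G a b + 2 * G b a - 2 * G b b := by
  simp only [mul_apply, Lt, Matrix.sub_apply, Matrix.add_apply, vecMulVec_apply, Pi.single_apply,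
    add_mul, mul_add, sub_mul, mul_sub, ite_mul, mul_ite, one_mul, mul_one, zero_mul, mul_zero,
    Finset.sum_add_distrib, Finset.sum_sub_distrib, Finset.sum_ite_eq, Finset.sum_ite_eq',
    Finset.mem_univ, if_true, Finset.sum_ite_irrel, Finset.sum_const_zero]
  split_ifs with hab
  · subst hab
    simp only [Finset.sum_const, Finset.card_univ, Fintype.card_fin, nsmul_eq_mul, hrow, hcol,
      trace, diag_apply]
    ring
  · ring

theorem sum_distinctTriples_Lt_mul_mul_Lt_apply (hG : G.IsSymm) (hrow : ∀ c, ∑ d, G c d = 0)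
    (a b : Fin n) :
    (∑ t ∈ distinctTriples (Fin n), Lt t.1 t.2.1 t.2.2 * G * Lt t.1 t.2.1 t.2.2) a b =
      (if a = b then ((n : ℝ) ^ 2 - 2 * n) * G a a + (2 * n - 2) * G.trace else 0)
      + (n - 4) * G a b - (n - 2) * (G a a + G b b) - G.trace := by
  have hcol (d : Fin n) : ∑ c, G c d = 0 := by simpa only [hG.apply d] using hrow d
  have h := congrFun₂ (two_nsmul_sum_distinctTriples (M := Matrix (Fin n) (Fin n) ℝ)
    (f := fun i j k => Lt i j k * G * Lt i j k)
    (fun i j => by rw [Lt_self_right, Matrix.zero_mul, Matrix.zero_mul])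
    (fun i j k => by rw [Lt_swap, Matrix.neg_mul, Matrix.mul_neg, Matrix.neg_mul, neg_neg])) a b
  simp only [Matrix.smul_apply, Matrix.sub_apply, Matrix.sum_apply] at h
  simp only [nsmul_eq_mul, Nat.cast_ofNat, sum_Lt_mul_mul_Lt_apply G hrow hcol,
    sum_Lt_self_mul_mul_Lt_self_apply G hrow hcol, hG.apply a b] at h
  rw [Matrix.sum_apply]
  split_ifs at h ⊢ with hab
  · subst hab
    linear_combination h / 2
  · linear_combination h / 2

theorem abs_sum_distinctTriples_Lt_mul_mul_Lt_apply_le (hG : G.IsSymm)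
    (hrow : ∀ c, ∑ d, G c d = 0) (hbound : ∀ a b, |G a b| ≤ 1) (hn : 2 ≤ n)
    (a b : Fin n) :
    |(∑ t ∈ distinctTriples (Fin n), Lt t.1 t.2.1 t.2.2 * G * Lt t.1 t.2.1 t.2.2) a b| ≤
      (if a = b then 3 * (n : ℝ) ^ 2 else 0) + 4 * n := by
  have htr : |G.trace| ≤ n :=
    calc |G.trace| ≤ ∑ c, |G c c| := Finset.abs_sum_le_sum_abs _ _
      _ ≤ ∑ _c : Fin n, 1 := Finset.sum_le_sum fun c _ => hbound c c
      _ = n := by simp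
  have hn' : (2 : ℝ) ≤ n := by exact_mod_cast hn
  obtain ⟨hab₁, hab₂⟩ := abs_le.1 (hbound a b)
  obtain ⟨haa₁, haa₂⟩ := abs_le.1 (hbound a a)
  obtain ⟨hbb₁, hbb₂⟩ := abs_le.1 (hbound b b)
  obtain ⟨htr₁, htr₂⟩ := abs_le.1 htr
  rw [sum_distinctTriples_Lt_mul_mul_Lt_apply G hG hrow, abs_le]
  split_ifs with hab
  · subst hab
    constructor <;> nlinarith
  · constructor <;> nlinarith

theorem norm_sum_distinctTriples_Lt_mul_mul_Lt_le (hG : G.IsSymm)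
    (hrow : ∀ c, ∑ d, G c d = 0) (hbound : ∀ a b, |G a b| ≤ 1) :
    ‖∑ t ∈ distinctTriples (Fin n), Lt t.1 t.2.1 t.2.2 * G * Lt t.1 t.2.1 t.2.2‖ ≤
      7 * (n : ℝ) ^ 2 := by
  rcases lt_or_ge n 2 with hn | hn
  · have : Subsingleton (Fin n) := Fin.subsingleton_iff_le_one.2 (by omega)
    rw [distinctTriples_eq_empty, Finset.sum_empty, norm_zero]
    positivity
  have hentry := abs_sum_distinctTriples_Lt_mul_mul_Lt_apply_le G hG hrow hbound hn
  refine l2_opNorm_le_of_sum_abs_le _ (by positivity) (fun a => ?_) (fun b => ?_)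
  · calc _ ≤ ∑ b : Fin n, ((if a = b then 3 * (n : ℝ) ^ 2 else 0) + 4 * (n : ℝ)) :=
          Finset.sum_le_sum fun b _ => hentry a b
      _ = 7 * (n : ℝ) ^ 2 := by simp [Finset.sum_add_distrib]; ring
  · calc _ ≤ ∑ a : Fin n, ((if a = b then 3 * (n : ℝ) ^ 2 else 0) + 4 * (n : ℝ)) :=
          Finset.sum_le_sum fun a _ => hentry a b
      _ = 7 * (n : ℝ) ^ 2 := by simp [Finset.sum_add_distrib]; ring

end Lt

/-- If the columns of `X` have Euclidean norm at most `1` and `X` is centered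
(`X·1ₙ = 0`), then the spectral norm of `Σ_{t ∈ T} L_t Xᵀ X L_t` is at most `7n²`,
where `T` is the set of triples `(i,j,k)` of distinct indices with `j < k`. -/
theorem sum_Lt_XtX_Lt_norm_le {p n : ℕ} (X : Matrix (Fin p) (Fin n) ℝ)
    (hnorm : ∀ i, Real.sqrt (∑ a, (X a i) ^ 2) ≤ 1)
    (hcen : X *ᵥ (1 : Fin n → ℝ) = 0) :
    ‖∑ t ∈ Finset.univ.filter
        (fun t : Fin n × Fin n × Fin n => t.1 ≠ t.2.1 ∧ t.1 ≠ t.2.2 ∧ t.2.1 < t.2.2),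
      Lt t.1 t.2.1 t.2.2 * (Xᵀ * X) * Lt t.1 t.2.1 t.2.2‖ ≤ 7 * (n : ℝ) ^ 2 := by
  have hG : (Xᵀ * X).IsSymm := by simp [IsSymm, transpose_mul]
  have hrow (c : Fin n) : ∑ d, (Xᵀ * X) c d = 0 := by
    have h : (Xᵀ * X) *ᵥ 1 = 0 := by rw [← mulVec_mulVec, hcen, mulVec_zero]
    simpa [mulVec, dotProduct] using congrFun h c
  exact norm_sum_distinctTriples_Lt_mul_mul_Lt_le _ hG hrow
    (abs_transpose_mul_self_apply_le_one X hnorm)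
end

section
/- Let G be a centered symmetric psd n×n matrix, write G = H + σ_G·V with H orthogonal to V (in the Frobenius inner product), where V = I_n − (1/n)1_n 1_n^T and σ_G = ⟨G,V⟩/‖V‖_F^2. Then ‖L(H)‖^2 ≥ n·‖H‖_F^2, where L(H) = (2H_{ik} − 2H_{ij} + H_{jj} − H_{kk} : (i,j,k) ∈ T) and ‖L(H)‖ is the Euclidean norm of this vector over all triples in T. -/
/-!
Put `H = G - σ_G V`. It inherits symmetry and zero row sums from `G` and `V`, and since it is
orthogonal to `V = I - J/n` and its entries sum to zero, it is traceless. Fix `i` and let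
`a_k = 2 H_ik - H_kk`, so that `L(H)_(i,j,k) = a_k - a_j`. Lagrange's identity for the pairs
`j < k` in `{1,…,n} \ {i}`, summed over `i`, gives exactly
`‖L(H)‖² = 4(n-1)‖H‖_F² + n(n-2) Σ_i H_ii²`, which is at least `n‖H‖_F²` once `n ≥ 2`;
for `n ≤ 1` the zero row sums force `H = 0`.
-/

open Matrix Finset

namespace Finset

variable {ι R : Type*}

theorem sum_sum_sub_sq [CommRing R] (s : Finset ι) (x : ι → R) :
    ∑ j ∈ s, ∑ k ∈ s, (x k - x j) ^ 2
      = 2 * #s * ∑ k ∈ s, x k ^ 2 - 2 * (∑ k ∈ s, x k) ^ 2 := by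
  have h (j k : ι) : (x k - x j) ^ 2 = x k ^ 2 - 2 * (x j * x k) + x j ^ 2 := by ring
  simp_rw [h, sum_add_distrib, sum_sub_distrib, ← mul_sum, ← sum_mul, sum_const, nsmul_eq_mul,
    ← mul_sum]
  ring

theorem two_mul_sum_sum_ite_lt [LinearOrder ι] [CommSemiring R] (s : Finset ι) (g : ι → ι → R)
    (hsymm : ∀ j k, g j k = g k j) (hdiag : ∀ j, g j j = 0) :
    2 * ∑ j ∈ s, ∑ k ∈ s, (if j < k then g j k else 0) = ∑ j ∈ s, ∑ k ∈ s, g j k := by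
  have hsplit (j k : ι) : g j k = (if j < k then g j k else 0) + (if k < j then g k j else 0) := by
    rcases lt_trichotomy j k with h | rfl | h
    · simp [h, h.not_gt]
    · simp [hdiag]
    · simp [h, h.not_gt, hsymm]
  rw [sum_congr rfl fun j _ => sum_congr rfl fun k _ => hsplit j k]
  simp only [sum_add_distrib]
  rw [sum_comm (f := fun j k => if k < j then g k j else 0)]
  ring

theorem sum_sum_ite_lt_sub_sq [LinearOrder ι] [Field R] [CharZero R] (s : Finset ι) (x : ι → R) :
    ∑ j ∈ s, ∑ k ∈ s, (if j < k then (x k - x j) ^ 2 else 0)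
      = #s * ∑ k ∈ s, x k ^ 2 - (∑ k ∈ s, x k) ^ 2 := by
  have h := two_mul_sum_sum_ite_lt s (fun j k => (x k - x j) ^ 2) (fun _ _ => by ring)
    (fun _ => by ring)
  rw [sum_sum_sub_sq] at h
  linear_combination h / 2

end Finset

theorem Matrix.trace_transpose_mul_self_eq_sum_sq {m n : Type*} [Fintype m] [Fintype n]
    (V : Matrix m n ℝ) : (Vᵀ * V).trace = ∑ i, ∑ j, V i j ^ 2 := by
  simp only [trace, diag, mul_apply, transpose_apply, sq]
  exact sum_comm

theorem Matrix.trace_transpose_mul_sub_smul_div {m n : Type*} [Fintype m] [Fintype n]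
    (G V : Matrix m n ℝ) :
    ((G - ((Gᵀ * V).trace / ∑ i, ∑ j, V i j ^ 2) • V)ᵀ * V).trace = 0 := by
  rw [← trace_transpose_mul_self_eq_sum_sq, transpose_sub, transpose_smul, Matrix.sub_mul,
    Matrix.smul_mul, trace_sub, trace_smul, smul_eq_mul, div_mul_cancel_of_imp, sub_self]
  intro hV
  rw [← conjTranspose_eq_transpose_of_trivial, trace_conjTranspose_mul_self_eq_zero_iff] at hV
  simp [hV]

theorem centering_isSymm (n : ℕ) : (centering n).IsSymm :=
  isSymm_one.sub ((IsSymm.ext fun _ _ => rfl).smul _)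

theorem centering_mulVec_one (n : ℕ) : centering n *ᵥ 1 = 0 := by
  rcases Nat.eq_zero_or_pos n with rfl | hn
  · exact Subsingleton.elim _ _
  ext i
  simp [centering, mulVec, dotProduct, one_apply, hn.ne']

theorem trace_eq_trace_transpose_mul_centering {n : ℕ} (H : Matrix (Fin n) (Fin n) ℝ)
    (hH : H *ᵥ 1 = 0) : H.trace = (Hᵀ * centering n).trace := by
  have hsum : ∑ i, ∑ j, H i j = 0 := by
    simpa [mulVec, dotProduct] using congrArg (fun v => ∑ i, v i) hH
  rw [centering, Matrix.mul_sub, Matrix.mul_one, Matrix.mul_smul, trace_sub, trace_smul,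
    trace_transpose]
  simp [trace, mul_apply, sum_comm (γ := Fin n), hsum]

def triples (n : ℕ) : Finset (Fin n × Fin n × Fin n) :=
  univ.filter fun t => t.1 ≠ t.2.1 ∧ t.1 ≠ t.2.2 ∧ t.2.1 < t.2.2

-- `tripleOp H (i, j, k) = D i j - D i k`, where `D i j = H i i + H j j - 2 H i j`.
def tripleOp {n : ℕ} (H : Matrix (Fin n) (Fin n) ℝ) (t : Fin n × Fin n × Fin n) : ℝ :=
  2 * H t.1 t.2.2 - 2 * H t.1 t.2.1 + H t.2.1 t.2.1 - H t.2.2 t.2.2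

theorem sum_triples_eq {n : ℕ} {M : Type*} [AddCommMonoid M] (f : Fin n × Fin n × Fin n → M) :
    ∑ t ∈ triples n, f t =
      ∑ i, ∑ j ∈ univ.erase i, ∑ k ∈ univ.erase i, if j < k then f (i, j, k) else 0 := by
  simp [triples, sum_filter, Fintype.sum_prod_type, ← filter_ne', ite_and, eq_comm]

theorem sum_triples_tripleOp_sq {n : ℕ} (H : Matrix (Fin n) (Fin n) ℝ) (hsymm : H.IsSymm)
    (hrow : H *ᵥ 1 = 0) (htr : H.trace = 0) :
    ∑ t ∈ triples n, tripleOp H t ^ 2 =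
      4 * (n - 1) * ∑ i, ∑ j, H i j ^ 2 + n * (n - 2) * ∑ i, H i i ^ 2 := by
  have hrow' (i : Fin n) : ∑ j, H i j = 0 := by simpa [mulVec, dotProduct] using congrFun hrow i
  have hcol (j : Fin n) : ∑ i, H i j = 0 := by
    rw [← hrow' j]; exact sum_congr rfl fun i _ => hsymm.apply j i
  set a : Fin n → Fin n → ℝ := fun i k => 2 * H i k - H k k with ha
  have hop (i j k : Fin n) : tripleOp H (i, j, k) = a i k - a i j := by
    simp only [tripleOp, a]; ring
  have hcard (i : Fin n) : (#(univ.erase i) : ℝ) = n - 1 := by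
    rw [eq_sub_iff_add_eq, ← Nat.cast_add_one, card_erase_add_one (mem_univ i), card_univ,
      Fintype.card_fin]
  have hsum (i : Fin n) : ∑ k ∈ univ.erase i, a i k = -H i i := by
    have hdiag : ∑ k, H k k = 0 := htr
    rw [sum_erase_eq_sub (mem_univ i), ha, sum_sub_distrib, ← mul_sum, hrow', hdiag]
    ring
  have hsum_sq (i : Fin n) : ∑ k ∈ univ.erase i, a i k ^ 2 = ∑ k, a i k ^ 2 - H i i ^ 2 := by
    rw [sum_erase_eq_sub (mem_univ i), ha]; ring
  have htotal : ∑ i, ∑ k, a i k ^ 2 = 4 * ∑ i, ∑ j, H i j ^ 2 + n * ∑ i, H i i ^ 2 := by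
    have hexp (i k : Fin n) : a i k ^ 2 = 4 * H i k ^ 2 - 4 * (H i k * H k k) + H k k ^ 2 := by
      rw [ha]; ring
    simp_rw [hexp, sum_add_distrib, sum_sub_distrib, ← mul_sum]
    rw [sum_comm (f := fun i k => H i k * H k k)]
    simp [← sum_mul, hcol]
  rw [sum_triples_eq]
  simp only [hop, sum_sum_ite_lt_sub_sq, hcard, hsum, hsum_sq, neg_sq]
  rw [sum_sub_distrib, ← mul_sum, sum_sub_distrib, htotal]
  ring

theorem mul_sum_sq_le_sum_triples_tripleOp_sq {n : ℕ} (H : Matrix (Fin n) (Fin n) ℝ)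
    (hsymm : H.IsSymm) (hrow : H *ᵥ 1 = 0) (htr : H.trace = 0) :
    n * ∑ i, ∑ j, H i j ^ 2 ≤ ∑ t ∈ triples n, tripleOp H t ^ 2 := by
  rcases lt_or_ge n 2 with hn | hn
  · have : Subsingleton (Fin n) := Fin.subsingleton_iff_le_one.mpr (by omega)
    have hH : H = 0 := by
      ext i j
      obtain rfl := Subsingleton.elim i j
      simpa [mulVec, dotProduct, Fintype.sum_subsingleton _ i] using congrFun hrow i
    simp [hH, tripleOp]
  · rw [sum_triples_tripleOp_sq H hsymm hrow htr]
    have hn' : (2 : ℝ) ≤ n := by exact_mod_cast hn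
    have hF : 0 ≤ ∑ i, ∑ j, H i j ^ 2 := by positivity
    have hD : 0 ≤ ∑ i, H i i ^ 2 := by positivity
    linarith [mul_nonneg (by linarith : (0 : ℝ) ≤ 3 * n - 4) hF,
      mul_nonneg (mul_nonneg (by linarith : (0 : ℝ) ≤ n) (by linarith : (0 : ℝ) ≤ n - 2)) hD]

/-- Restricted-isometry type bound: for a centered symmetric psd matrix `G`, writing
`G = H + σ_G·V` with `H = G − σ_G·V` orthogonal to `V`, we have
`‖L(H)‖² = Σ_{t∈T} (2H_{ik} − 2H_{ij} + H_{jj} − H_{kk})² ≥ n·‖H‖_F²`. -/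
theorem L_restricted_isometry {n : ℕ} (G : Matrix (Fin n) (Fin n) ℝ)
    (hG : G.PosSemidef) (hcen : G *ᵥ (1 : Fin n → ℝ) = 0) :
    (n : ℝ) * (∑ i, ∑ j, ((G - sigmaG G • centering n) i j) ^ 2) ≤
      ∑ t ∈ Finset.univ.filter
          (fun t : Fin n × Fin n × Fin n => t.1 ≠ t.2.1 ∧ t.1 ≠ t.2.2 ∧ t.2.1 < t.2.2),
        (2 * (G - sigmaG G • centering n) t.1 t.2.2
          - 2 * (G - sigmaG G • centering n) t.1 t.2.1
          + (G - sigmaG G • centering n) t.2.1 t.2.1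
          - (G - sigmaG G • centering n) t.2.2 t.2.2) ^ 2 := by
  set H := G - sigmaG G • centering n with hH
  have hsymm : H.IsSymm :=
    (isHermitian_iff_isSymm.mp hG.isHermitian).sub ((centering_isSymm n).smul _)
  have hrow : H *ᵥ 1 = 0 := by
    rw [hH, sub_mulVec, smul_mulVec, centering_mulVec_one, hcen, smul_zero, sub_zero]
  have htr : H.trace = 0 := by
    rw [trace_eq_trace_transpose_mul_centering H hrow]
    exact trace_transpose_mul_sub_smul_div G (centering n)
  exact mul_sum_sq_le_sum_triples_tripleOp_sq H hsymm hrow htr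
end
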